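/- Let C⊆S be a set of states in a stochastic game and let s,s'∈C. If state s leads in C to state s', then there exists a pure stationary strategy profile y such that P_{s,y}(ν_{{s'}} < ν_{C^c}) = 1, i.e., under y, starting from s, the play reaches s' before leaving C with probability 1. Consequently, for every nonempty D⊂C there is a pure stationary strategy profile that from any initial state in C∖D leads the play to D without leaving C, provided every state of C leads in C to every other state of C. -/

import Mathlib

open Filter Topology
open scoped Classical

noncomputable section

/-- A probability distribution on a finite type, given as a vector of nonnegative
real numbers summing to one. -/
def ProbVec (X : Type*) [Fintype X] : Type _ :=
  {p : X → ℝ // (∀ x, 0 ≤ p x) ∧ ∑ x, p x = 1}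

instance instNonemptyProbVec {X : Type*} [Fintype X] [Nonempty X] : Nonempty (ProbVec X) := by
  refine ⟨⟨fun _ => (Fintype.card X : ℝ)⁻¹, fun _ => by positivity, ?_⟩⟩
  have h : (Fintype.card X : ℝ) ≠ 0 := Nat.cast_ne_zero.mpr Fintype.card_ne_zero
  simp [Finset.sum_const, Finset.card_univ, nsmul_eq_mul, mul_inv_cancel₀ h]

/-- The Dirac (pure) distribution concentrated at `x`. -/
def pureDist {X : Type*} [Fintype X] (x : X) : ProbVec X :=
  ⟨fun y => if y = x then 1 else 0, fun y => by dsimp only; split <;> norm_num, by simp⟩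

/-- An action profile: one action for each player. -/
abbrev ActProf {ι : Type*} (A : ι → Type*) := ∀ i, A i

/-- A finite history of a stochastic game: the list of past (state, action profile)
pairs, in reverse chronological order, together with the current state. -/
abbrev Hist (S : Type*) {ι : Type*} (A : ι → Type*) : Type _ := List (S × ActProf A) × S

/-- The product distribution on action profiles induced by a mixed action of each player. -/
def prodDist {ι : Type*} {A : ι → Type*} [Fintype ι] [DecidableEq ι] [∀ i, Fintype (A i)]
    (x : ∀ i, ProbVec (A i)) : ProbVec (ActProf A) := by
  refine ⟨fun a => ∏ i, (x i).1 (a i),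
    fun a => Finset.prod_nonneg fun i _ => (x i).2.1 _, ?_⟩
  rw [← Fintype.prod_sum (fun i (b : A i) => (x i).1 b)]
  simp [fun i => (x i).2.2]

/-- A multiplayer stochastic game with player set `ι`, state set `S`, and action
sets `A i` (the same at every state). `u` is the payoff function and `q` the
transition function. -/
structure StochGame (ι S : Type*) (A : ι → Type*) [Fintype ι] [DecidableEq ι]
    [Fintype S] [∀ i, Fintype (A i)] where
  u : ι → S → ActProf A → ℝ
  q : S → ActProf A → S → ℝ
  q_nonneg : ∀ s a s', 0 ≤ q s a s'
  q_sum : ∀ s a, ∑ s', q s a s' = 1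

namespace StochGame

variable {ι S : Type*} {A : ι → Type*} [Fintype ι] [DecidableEq ι] [Fintype S]
  [∀ i, Fintype (A i)] [Nonempty S] [∀ i, Nonempty (A i)]

variable (ι S A) in
/-- A correlated strategy: a map from finite histories to correlated mixed actions. -/
abbrev CorrStrategy := Hist S A → ProbVec (ActProf A)

variable (ι S A) in
/-- A (behavior) strategy profile: for each player, a map from finite histories to
mixed actions of that player. -/
abbrev Profile := ∀ i, Hist S A → ProbVec (A i)

/-- The correlated strategy induced by a strategy profile. -/
def corrOf (σ : Profile ι S A) : CorrStrategy ι S A := fun h => prodDist (fun i => σ i h)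

/-- A stationary strategy profile, determined by a mixed action of each player at each state. -/
def statProf (x : ∀ i, S → ProbVec (A i)) : Profile ι S A := fun i h => x i h.2

/-- A stationary correlated strategy, determined by a correlated mixed action at each state. -/
def statCorr (y : S → ProbVec (ActProf A)) : CorrStrategy ι S A := fun h => y h.2

/-- A strategy profile is stationary if each player's mixed action depends only on the
current state. -/
def IsStationary (σ : Profile ι S A) : Prop := ∃ x, σ = statProf x

/-- A strategy profile is pure stationary if each player plays a deterministic action
depending only on the current state. -/
def IsPureStationary (σ : Profile ι S A) : Prop :=
  ∃ c : ∀ i, S → A i, σ = fun i h => pureDist (c i h.2)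

/-- The continuation correlated strategy of `τ` after the finite history `h`. -/
def contC (τ : CorrStrategy ι S A) (h : Hist S A) : CorrStrategy ι S A :=
  fun h' => τ (h'.1 ++ h.1, h'.2)

variable (G : StochGame ι S A)

/-- The probability, under the correlated strategy `τ` with initial state `s1`, that
the play follows the given finite history (list of past (state, action) pairs in reverse
chronological order, then the current state). -/
def hprob (τ : CorrStrategy ι S A) (s1 : S) : List (S × ActProf A) → S → ℝ
  | [], s => if s = s1 then 1 else 0
  | p :: l, s => hprob τ s1 l p.1 * (τ (l, p.1)).1 p.2 * G.q p.1 p.2 s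

/-- The expected payoff of player `i` at stage `n+1` (so that `n` past stages have
elapsed) under the correlated strategy `τ` with initial state `s1`. -/
def stagePay (τ : CorrStrategy ι S A) (s1 : S) (i : ι) (n : ℕ) : ℝ :=
  ∑ f : Fin n → S × ActProf A, ∑ s : S,
    G.hprob τ s1 (List.ofFn f) s * ∑ a : ActProf A, (τ (List.ofFn f, s)).1 a * G.u i s a

/-- The `lam`-discounted payoff of player `i` at the initial state `s1` under the
correlated strategy `τ`. -/
def disc (lam : ℝ) (i : ι) (s1 : S) (τ : CorrStrategy ι S A) : ℝ :=
  (1 - lam) * ∑' n : ℕ, lam ^ n * G.stagePay τ s1 i n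

/-- The `lam`-discounted payoff of player `i` at the initial state `s1` under the
strategy profile `σ`. -/
def discP (lam : ℝ) (i : ι) (s1 : S) (σ : Profile ι S A) : ℝ :=
  G.disc lam i s1 (corrOf σ)

/-- Replace player `i`'s strategy in the profile `σ` by `τi`. -/
def replaceStrat (σ : Profile ι S A) (i : ι) (τi : Hist S A → ProbVec (A i)) :
    Profile ι S A :=
  fun j => if h : j = i then cast (by rw [h]) τi else σ j

/-- The `lam`-discounted min-max value of player `i` at the initial state `s`. -/
def vlam (lam : ℝ) (i : ι) (s : S) : ℝ :=
  ⨅ σ : Profile ι S A, ⨆ τi : Hist S A → ProbVec (A i),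
    G.discP lam i s (replaceStrat σ i τi)

/-- The uniform min-max value of player `i` at state `s`: the limit of the
`lam`-discounted min-max values as `lam → 1`. -/
def v1 (i : ι) (s : S) : ℝ := limUnder (𝓝[<] (1 : ℝ)) (fun lam => G.vlam lam i s)

/-- A correlated strategy is `w`-acceptable if for every sufficiently large discount
factor it yields each player `i` at least `w s i` from every initial state `s`. -/
def WAcceptableCorr (w : S → ι → ℝ) (τ : CorrStrategy ι S A) : Prop :=
  ∃ lam0 : ℝ, 0 ≤ lam0 ∧ lam0 < 1 ∧
    ∀ (i : ι) (s1 : S) (lam : ℝ), lam0 ≤ lam → lam < 1 → w s1 i ≤ G.disc lam i s1 τ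

/-- A strategy profile is `w`-acceptable if for every sufficiently large discount
factor it yields each player `i` at least `w s i` from every initial state `s`. -/
def WAcceptable (w : S → ι → ℝ) (σ : Profile ι S A) : Prop :=
  G.WAcceptableCorr w (corrOf σ)

/-- A strategy profile is min-max `ε`-acceptable if it is `w`-acceptable for
`w i s = v¹_i(s) - ε`. -/
def MinmaxAcceptable (ε : ℝ) (σ : Profile ι S A) : Prop :=
  G.WAcceptable (fun s i => G.v1 i s - ε) σ

/-- A correlated strategy is min-max `ε`-acceptable if it is `w`-acceptable for
`w i s = v¹_i(s) - ε`. -/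
def MinmaxAcceptableCorr (ε : ℝ) (τ : CorrStrategy ι S A) : Prop :=
  G.WAcceptableCorr (fun s i => G.v1 i s - ε) τ

/-- `w` is a uniform equilibrium payoff. -/
def UnifEqPayoff (w : S → ι → ℝ) : Prop :=
  ∀ ε : ℝ, 0 < ε → ∃ lam0 : ℝ, 0 ≤ lam0 ∧ lam0 < 1 ∧ ∃ σ : Profile ι S A,
    ∀ (s1 : S) (i : ι) (lam : ℝ), lam0 ≤ lam → lam < 1 →
      |G.discP lam i s1 σ - w s1 i| < ε ∧
      ∀ τi : Hist S A → ProbVec (A i),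
        G.discP lam i s1 (replaceStrat σ i τi) - ε ≤ G.discP lam i s1 σ

end StochGame

/-- A finite automaton with stochastic transitions that implements a behavior strategy of
player `i`: its inputs are pairs (action profile, new state of the game) and its outputs are
mixed actions of player `i`. -/
structure Auto (ι S : Type*) (A : ι → Type*) [Fintype ι] [DecidableEq ι] [Fintype S]
    [∀ j, Fintype (A j)] (i : ι) where
  Q : Type
  [fintypeQ : Fintype Q]
  f : Q → ProbVec (A i)
  g : Q → ActProf A × S → ProbVec Q
  init : Q

attribute [instance] Auto.fintypeQ

namespace Auto

variable {ι S : Type*} {A : ι → Type*} [Fintype ι] [DecidableEq ι] [Fintype S]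
  [∀ j, Fintype (A j)] {i : ι}

/-- The (unnormalized) likelihood that, along the given finite history, the automaton's
private randomization is consistent with player `i`'s realized actions and the automaton
ends up in state `qq`. -/
def wt (M : Auto ι S A i) : List (S × ActProf A) → S → M.Q → ℝ
  | [], _, qq => if qq = M.init then 1 else 0
  | p :: l, s, qq =>
      ∑ q' : M.Q, M.wt l p.1 q' * (M.f q').1 (p.2 i) * (M.g q' (p.2, s)).1 qq

/-- The automaton `M` implements the behavior strategy `σi` of player `i`: at every
finite history that is consistent with the automaton's behavior, `σi` plays the mixed
action obtained by averaging the automaton's output over its (conditional) state. -/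
def Implements (M : Auto ι S A i) (σi : Hist S A → ProbVec (A i)) : Prop :=
  ∀ h : Hist S A, 0 < ∑ qq : M.Q, M.wt h.1 h.2 qq →
    ∀ b : A i, (σi h).1 b * ∑ qq : M.Q, M.wt h.1 h.2 qq
      = ∑ qq : M.Q, M.wt h.1 h.2 qq * (M.f qq).1 b

end Auto

/-- Player `i`'s behavior strategy `σi` can be implemented by an automaton with at most
`n` states. -/
def ImplementableBy {ι S : Type*} {A : ι → Type*} [Fintype ι] [DecidableEq ι] [Fintype S]
    [∀ j, Fintype (A j)] (i : ι) (σi : Hist S A → ProbVec (A i)) (n : ℕ) : Prop :=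
  ∃ M : Auto ι S A i, M.Implements σi ∧ Nat.card M.Q ≤ n

namespace StochGame

variable {ι S : Type*} {A : ι → Type*} [Fintype ι] [DecidableEq ι] [Fintype S]
  [∀ i, Fintype (A i)] [Nonempty S] [∀ i, Nonempty (A i)]

variable (G : StochGame ι S A)

/-- The probability `q(D | s, a)` of moving into the set `D` from state `s` when the
action profile `a` is played. -/
def qD (s : S) (a : ActProf A) (D : Set S) : ℝ :=
  ∑ s' : S, if s' ∈ D then G.q s a s' else 0

/-- The probability of moving into the set `D` from state `s` when the mixed action
profile `x` is played. -/
def qXD (s : S) (x : ∀ i, ProbVec (A i)) (D : Set S) : ℝ :=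
  ∑ a : ActProf A, (prodDist x).1 a * G.qD s a D

/-- The probability, from the initial state `s1` under the correlated strategy `τ`,
that the play reaches the set `D` (strictly) before leaving the set `C`:
`P(ν_D < ν_{Cᶜ})`. -/
def reachInProb (τ : CorrStrategy ι S A) (s1 : S) (C D : Set S) : ℝ :=
  ∑' n : ℕ, ∑ f : Fin n → S × ActProf A, ∑ s : S,
    if (∀ k, (f k).1 ∈ C ∧ (f k).1 ∉ D) ∧ s ∈ C ∧ s ∈ D
    then G.hprob τ s1 (List.ofFn f) s else 0

/-- The probability, from the initial state `s1` under the correlated strategy `τ`,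
that the play eventually leaves the set `C`: `P(ν_{Cᶜ} < ∞)`. -/
def leaveProb (τ : CorrStrategy ι S A) (s1 : S) (C : Set S) : ℝ :=
  ∑' n : ℕ, ∑ f : Fin n → S × ActProf A, ∑ s : S,
    if (∀ k, (f k).1 ∈ C) ∧ s ∉ C then G.hprob τ s1 (List.ofFn f) s else 0

/-- The expectation, from the initial state `s1` under the correlated strategy `τ`, of
`φ(s^{ν_{Cᶜ}})`, where `ν_{Cᶜ}` is the first stage at which the play is outside `C`. -/
def exitVal (τ : CorrStrategy ι S A) (s1 : S) (C : Set S) (φ : S → ℝ) : ℝ :=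
  ∑' n : ℕ, ∑ f : Fin n → S × ActProf A, ∑ s : S,
    if (∀ k, (f k).1 ∈ C) ∧ s ∉ C then G.hprob τ s1 (List.ofFn f) s * φ s else 0

/-- The payoff of the one-shot game `G(s)`: the expectation of tomorrow's uniform
min-max value of player `i` when the action profile `a` is played at state `s`. -/
def ustar (i : ι) (s : S) (a : ActProf A) : ℝ := ∑ s' : S, G.q s a s' * G.v1 i s'

/-- The multilinear extension of the one-shot payoff `ustar` to mixed action profiles. -/
def ustarX (i : ι) (s : S) (x : ∀ i, ProbVec (A i)) : ℝ :=
  ∑ a : ActProf A, (prodDist x).1 a * G.ustar i s a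

/-- The set `E(s)` of mixed-action Nash equilibria of the one-shot game `G(s)`. -/
def Eset (s : S) : Set (∀ i, ProbVec (A i)) :=
  {x | ∀ i : ι, ∀ d : ProbVec (A i),
    G.ustarX i s (Function.update x i d) ≤ G.ustarX i s x}

/-- A set of states `D` is closed under `E` if no mixed action profile in `E(s)`, for
`s ∈ D`, can take the play out of `D`. -/
def ClosedUnderE (D : Set S) : Prop := ∀ s ∈ D, ∀ x ∈ G.Eset s, G.qXD s x D = 1

/-- State `s` leads in `C` to state `s'`: some strategy profile guarantees that the play
reaches `s'` before leaving `C`, with probability 1. -/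
def LeadsIn (C : Set S) (s s' : S) : Prop :=
  ∃ σ : Profile ι S A, G.reachInProb (corrOf σ) s C {s'} = 1

/-- A (nonempty) set of states `C` is communicating under `E`. -/
def CommUnderE (C : Set S) : Prop :=
  C.Nonempty ∧ G.ClosedUnderE C ∧ (∀ s ∈ C, ∀ s' ∈ C, G.LeadsIn C s s') ∧
    ∀ (i : ι), ∀ s ∈ C, ∀ s' ∈ C, G.v1 i s = G.v1 i s'

/-- A maximal communicating set under `E`. -/
def MaxCommUnderE (C : Set S) : Prop :=
  G.CommUnderE C ∧ ∀ C', G.CommUnderE C' → C ⊆ C' → C' = C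

/-- The union of all maximal communicating sets under `E`. -/
def Cstar : Set S := {s | ∃ C : Set S, G.MaxCommUnderE C ∧ s ∈ C}

/-- The probability that the pair (state, action profile) at stage `n+1` equals `(s,a)`. -/
def saProb (τ : CorrStrategy ι S A) (s1 : S) (n : ℕ) (s : S) (a : ActProf A) : ℝ :=
  ∑ f : Fin n → S × ActProf A,
    G.hprob τ s1 (List.ofFn f) s * (τ (List.ofFn f, s)).1 a

/-- The Cesàro averages whose limit (if it exists) is the state-action frequency. -/
def freqCesaro (τ : CorrStrategy ι S A) (s1 : S) (s : S) (a : ActProf A) : ℕ → ℝ :=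
  fun N => (N : ℝ)⁻¹ * ∑ n ∈ Finset.range N, G.saProb τ s1 n s a

/-- The state-action frequency vector of `τ` at the initial state `s1` is well defined. -/
def FreqExists (τ : CorrStrategy ι S A) (s1 : S) : Prop :=
  ∀ (s : S) (a : ActProf A), ∃ r : ℝ, Tendsto (G.freqCesaro τ s1 s a) atTop (𝓝 r)

/-- The state-action frequency vector of `τ` at the initial state `s1`. -/
def freq (τ : CorrStrategy ι S A) (s1 : S) : S → ActProf A → ℝ :=
  fun s a => limUnder atTop (G.freqCesaro τ s1 s a)

/-- The long-run average payoff of player `i` associated with a state-action frequency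
vector `ρ`. -/
def freqPay (i : ι) (ρ : S → ActProf A → ℝ) : ℝ := ∑ s : S, ∑ a : ActProf A, ρ s a * G.u i s a

/-- A nonempty set of states `D` is closed under the stationary profile `x`. -/
def ClosedUnderStat (x : ∀ i, S → ProbVec (A i)) (D : Set S) : Prop :=
  D.Nonempty ∧ ∀ s ∈ D, G.qXD s (fun i => x i s) D = 1

/-- `D` is an irreducible set with respect to the stationary profile `x`: it is closed
under `x` and contains no other closed set. -/
def IrredUnder (x : ∀ i, S → ProbVec (A i)) (D : Set S) : Prop :=
  G.ClosedUnderStat x D ∧ ∀ D' ⊂ D, ¬ G.ClosedUnderStat x D'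

/-- The set `R(C)`: the convex hull of the state-action frequency vectors of stationary
strategy profiles started inside an irreducible set contained in `C`. -/
def RC (C : Set S) : Set (S → ActProf A → ℝ) :=
  convexHull ℝ {ρ | ∃ (x : ∀ i, S → ProbVec (A i)) (D : Set S) (s1 : S),
    G.IrredUnder x D ∧ D ⊆ C ∧ s1 ∈ D ∧
    G.FreqExists (corrOf (statProf x)) s1 ∧ ρ = G.freq (corrOf (statProf x)) s1}

/-- `(s, a)` is an exit from the set `C`: `s ∈ C` and playing `a` at `s` leaves `C` with
positive probability. -/
def IsExit (C : Set S) (s : S) (a : ActProf A) : Prop := s ∈ C ∧ G.qD s a C < 1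

/-- The probability that the first exit from `C` that is played is `(s, a)`:
`μ(s1, τ, C; s, a) = P(s^{ν*_C} = s, a^{ν*_C} = a)`. -/
def exitMu (τ : CorrStrategy ι S A) (s1 : S) (C : Set S) (s : S) (a : ActProf A) : ℝ :=
  ∑' n : ℕ, ∑ f : Fin n → S × ActProf A,
    if ∀ k, ¬ G.IsExit C (f k).1 (f k).2
    then G.hprob τ s1 (List.ofFn f) s * (τ (List.ofFn f, s)).1 a else 0

/-- A strategy profile is an `ε`-perturbation of `E` if after every finite history the
mixed action profile that is played is `ε`-close to some element of `E(s)`, where `s`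
is the current state. -/
def Perturb (ε : ℝ) (σ : Profile ι S A) : Prop :=
  ∀ h : Hist S A, ∃ x ∈ G.Eset h.2, ∀ (i : ι) (b : A i), |(σ i h).1 b - (x i).1 b| < ε

/-- The expected continuation min-max value of player `i` at state `s` when player `i`
plays action `ai` and the other players play their marginals under the correlated mixed
action `α`. -/
def ustarDev (i : ι) (s : S) (ai : A i) (α : ProbVec (ActProf A)) : ℝ :=
  ∑ a : ActProf A, α.1 a * G.ustar i s (Function.update a i ai)

/-- A correlated strategy is `ε`-individually rational. -/
def IndivRationalCorr (ε : ℝ) (τ : CorrStrategy ι S A) : Prop :=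
  ∀ (h : Hist S A) (i : ι) (ai : A i), ∃ L : ℝ,
    Tendsto (fun lam => G.disc lam i h.2 (contC τ h)) (𝓝[<] (1 : ℝ)) (𝓝 L) ∧
    G.ustarDev i h.2 ai (τ h) ≤ L + ε

/-- A strategy profile is `ε`-individually rational. -/
def IndivRational (ε : ℝ) (σ : Profile ι S A) : Prop :=
  G.IndivRationalCorr ε (corrOf σ)

/-- A strategy profile is subgame-perfect min-max `ε`-acceptable. -/
def SubgamePerfectMinmaxAcceptable (ε : ℝ) (σ : Profile ι S A) : Prop :=
  ∀ (i : ι) (h : Hist S A), ∃ lam0 : ℝ, 0 ≤ lam0 ∧ lam0 < 1 ∧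
    ∀ lam : ℝ, lam0 ≤ lam → lam < 1 →
      G.v1 i h.2 - ε ≤ G.disc lam i h.2 (contC (corrOf σ) h)

/-- The prefix of the history `(l, s)` having `m` past stages (`m < l.length`). -/
def histPrefix (l : List (S × ActProf A)) (m : ℕ) (s : S) : Hist S A :=
  match l.drop (l.length - m - 1) with
  | [] => (l, s)
  | p :: rest => (rest, p.1)

/-- The expectation of `v¹_i(s^ν)`, where `ν` is the stopping time that stops at the
first history at which the stopping rule `r` holds, and in any case no later than after
`N ≥ 1` further stages. -/
def stopVal (τ : CorrStrategy ι S A) (s1 : S) (i : ι) (N : ℕ) (r : Hist S A → Prop) : ℝ :=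
  ∑ k ∈ Finset.Icc 1 N, ∑ f : Fin k → S × ActProf A, ∑ s : S,
    if (r (List.ofFn f, s) ∨ k = N) ∧
        (∀ m, 1 ≤ m → m < k → ¬ r (histPrefix (List.ofFn f) m s))
    then G.hprob τ s1 (List.ofFn f) s * G.v1 i s else 0

/-- The conditions (SV.1)-(SV.4) satisfied by the strategy profiles constructed by
Solan and Vieille (2002). -/
def SVConds (ε : ℝ) (σ : Profile ι S A) : Prop :=
  G.Perturb ε σ ∧
  (∀ h : Hist S A, G.FreqExists (contC (corrOf σ) h) h.2) ∧
  (∀ h : Hist S A, ∀ N : ℕ, 1 ≤ N → ∀ r : Hist S A → Prop, ∀ i : ι,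
    G.v1 i h.2 - ε ≤ G.stopVal (contC (corrOf σ) h) h.2 i N r) ∧
  (∀ (h : Hist S A) (i : ι),
    G.v1 i h.2 - ε ≤ G.freqPay i (G.freq (contC (corrOf σ) h) h.2))

/-- A communicating set `C` has type A with respect to the family `(σ̂^ε)`:
for some finite history, with probability bounded away from zero (as `ε → 0`)
the play never leaves `C`. -/
def TypeA (hatσ : ℝ → Profile ι S A) (C : Set S) : Prop :=
  ∃ h : Hist S A,
    0 < Filter.limsup (fun ε => 1 - G.leaveProb (corrOf (hatσ ε)) h.2 C) (𝓝[>] (0 : ℝ))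

end StochGame


/-!
Fix a profile `σ` under which, from `s`, the play reaches `D` before leaving `C` almost surely,
and call a state reachable if `σ` visits it with positive probability while the play is still
in `C \ D`. Every reachable state of `C \ D` has a path to `D` along transitions of positive
probability under actions that `σ` plays with positive probability: otherwise the reachable
states without such a path would form a trap that `σ` never leaves, and the positive mass
entering it would never reach `D`. Playing at each such state the first action of a shortest
path gives a pure stationary profile under which the play stays among reachable states (all
in `C`, since `σ` leaves `C` with probability `0`) and, from each of them, reaches a state of
smaller rank with probability at least some `δ > 0`. Hence the probability of still being in
`C \ D` after `n` stages decays geometrically. For the second part, the profiles obtained for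
the initial states of `C \ D` and a target `d ∈ D` are glued together, ranking the states of
later profiles above those of earlier ones.
-/

open Finset

lemma sum_fun_fin_succ_eq_sum_cons {α M : Type*} [Fintype α] [AddCommMonoid M] {n : ℕ}
    (F : (Fin (n + 1) → α) → M) :
    ∑ f, F f = ∑ p : α, ∑ g : Fin n → α, F (Fin.cons p g) := by
  rw [← (Fin.consEquiv fun _ => α).sum_comp, Fintype.sum_prod_type]
  rfl

lemma sum_mul_le_one_sub {α : Type*} [Fintype α] {p g : α → ℝ} (hp : ∀ x, 0 ≤ p x)
    (hp1 : ∑ x, p x = 1) (hg : ∀ x, g x ≤ 1) (v : α) :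
    ∑ x, p x * g x ≤ 1 - p v * (1 - g v) := by
  have h := single_le_sum (f := fun x => p x * (1 - g x))
    (fun x _ => mul_nonneg (hp x) (sub_nonneg.2 (hg x))) (mem_univ v)
  simp only [mul_sub, mul_one, sum_sub_distrib, hp1] at h
  linarith

lemma exists_pos_le_of_pos {α : Type*} [Fintype α] (f : α → ℝ) :
    ∃ δ, 0 < δ ∧ δ ≤ 1 ∧ ∀ x, 0 < f x → δ ≤ f x := by
  rcases (univ.filter fun x => 0 < f x).eq_empty_or_nonempty with h | h
  · exact ⟨1, one_pos, le_rfl, fun x hx => absurd hx (filter_eq_empty_iff.1 h (mem_univ x))⟩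
  · obtain ⟨y, hy, hmin⟩ := exists_min_image _ f h
    exact ⟨min 1 (f y), lt_min one_pos (mem_filter.1 hy).2, min_le_left _ _,
      fun x hx => (min_le_right _ _).trans (hmin x (mem_filter.2 ⟨mem_univ x, hx⟩))⟩

lemma tendsto_zero_of_antitone_of_le_mul {u : ℕ → ℝ} {c : ℝ} {K : ℕ} (hu : Antitone u)
    (hu0 : ∀ n, 0 ≤ u n) (hK : 0 < K) (hc0 : 0 ≤ c) (hc1 : c < 1)
    (hdecay : ∀ n, u (n + K) ≤ c * u n) : Tendsto u atTop (𝓝 0) := by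
  have hpow : ∀ j, u (j * K) ≤ c ^ j * u 0 := by
    intro j
    induction j with
    | zero => simp
    | succ j ih =>
      calc u ((j + 1) * K) = u (j * K + K) := by rw [add_one_mul]
        _ ≤ c * u (j * K) := hdecay _
        _ ≤ c * (c ^ j * u 0) := mul_le_mul_of_nonneg_left ih hc0
        _ = c ^ (j + 1) * u 0 := by ring
  have hlim : Tendsto (fun n => c ^ (n / K) * u 0) atTop (𝓝 0) := by
    simpa using ((tendsto_pow_atTop_nhds_zero_of_lt_one hc0 hc1).comp
      (Nat.tendsto_div_const_atTop hK.ne')).mul_const (u 0)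
  exact squeeze_zero hu0 (fun n => (hu (Nat.div_mul_le_self n K)).trans (hpow _)) hlim

namespace StochGame

def pureStat {ι S : Type*} {A : ι → Type*} [∀ i, Fintype (A i)] (act : S → ActProf A) :
    Profile ι S A :=
  fun i h => pureDist (act h.2 i)

lemma isPureStationary_pureStat {ι S : Type*} {A : ι → Type*} [∀ i, Fintype (A i)]
    (act : S → ActProf A) : IsPureStationary (pureStat act) :=
  ⟨fun i t => act t i, rfl⟩

lemma corrOf_pureStat_apply {ι S : Type*} {A : ι → Type*} [Fintype ι] [DecidableEq ι]
    [∀ i, Fintype (A i)] (act : S → ActProf A) (h : Hist S A) (a : ActProf A) :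
    (corrOf (pureStat act) h).1 a = if a = act h.2 then 1 else 0 := by
  simp [corrOf, pureStat, prodDist, pureDist, Fintype.prod_boole, funext_iff]

variable {ι S : Type*} {A : ι → Type*} [Fintype ι] [DecidableEq ι] [Fintype S]
  [∀ i, Fintype (A i)] (G : StochGame ι S A)

section Mass

variable (τ : CorrStrategy ι S A) (s₁ : S) (X : Set S)

lemma hprob_nonneg : ∀ (l : List (S × ActProf A)) (u : S), 0 ≤ G.hprob τ s₁ l u
  | [], u => by unfold hprob; split_ifs <;> norm_num
  | p :: l, u => mul_nonneg (mul_nonneg (hprob_nonneg l p.1) ((τ _).2.1 _)) (G.q_nonneg _ _ _)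

/-- The probability that the first `n` states of the play lie in `X` and the state at
stage `n + 1` is `u`. -/
def stayMass (n : ℕ) (u : S) : ℝ :=
  ∑ f : Fin n → S × ActProf A, if ∀ k, (f k).1 ∈ X then G.hprob τ s₁ (List.ofFn f) u else 0

def actMass (n : ℕ) (u : S) (a : ActProf A) : ℝ :=
  ∑ f : Fin n → S × ActProf A,
    if ∀ k, (f k).1 ∈ X then G.hprob τ s₁ (List.ofFn f) u * (τ (List.ofFn f, u)).1 a else 0

/-- The probability that the first `n + 1` states of the play lie in `X`. -/
def aliveMass (n : ℕ) : ℝ := ∑ u with u ∈ X, G.stayMass τ s₁ X n u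

lemma stayMass_nonneg (n : ℕ) (u : S) : 0 ≤ G.stayMass τ s₁ X n u :=
  sum_nonneg fun _ _ => by split_ifs; exacts [G.hprob_nonneg τ s₁ _ u, le_rfl]

lemma actMass_nonneg (n : ℕ) (u : S) (a : ActProf A) : 0 ≤ G.actMass τ s₁ X n u a :=
  sum_nonneg fun _ _ => by
    split_ifs; exacts [mul_nonneg (G.hprob_nonneg τ s₁ _ u) ((τ _).2.1 a), le_rfl]

lemma aliveMass_nonneg (n : ℕ) : 0 ≤ G.aliveMass τ s₁ X n :=
  sum_nonneg fun u _ => G.stayMass_nonneg τ s₁ X n u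

lemma stayMass_zero (u : S) : G.stayMass τ s₁ X 0 u = if u = s₁ then 1 else 0 := by
  simp [stayMass, hprob]

lemma sum_actMass (n : ℕ) (u : S) : ∑ a, G.actMass τ s₁ X n u a = G.stayMass τ s₁ X n u := by
  unfold actMass stayMass
  rw [sum_comm]
  refine sum_congr rfl fun f _ => ?_
  split_ifs
  · rw [← mul_sum, (τ _).2.2, mul_one]
  · exact sum_const_zero

lemma stayMass_succ (n : ℕ) (u : S) :
    G.stayMass τ s₁ X (n + 1) u = ∑ t with t ∈ X, ∑ a, G.actMass τ s₁ X n t a * G.q t a u := by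
  unfold stayMass actMass
  rw [sum_fun_fin_succ_eq_sum_cons, Fintype.sum_prod_type]
  simp only [Fin.forall_fin_succ, Fin.cons_zero, Fin.cons_succ, List.ofFn_cons, hprob, sum_filter,
    sum_mul]
  refine sum_congr rfl fun t _ => ?_
  split_ifs with ht
  · simp only [ht, true_and, ite_mul, zero_mul]
  · simp [ht]

lemma sum_stayMass_succ (n : ℕ) :
    ∑ u, G.stayMass τ s₁ X (n + 1) u = G.aliveMass τ s₁ X n := by
  simp_rw [aliveMass, stayMass_succ, ← sum_actMass (X := X)]
  rw [sum_comm]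
  refine sum_congr rfl fun t _ => ?_
  rw [sum_comm]
  simp [← mul_sum, G.q_sum]

lemma aliveMass_succ_le (n : ℕ) : G.aliveMass τ s₁ X (n + 1) ≤ G.aliveMass τ s₁ X n := by
  rw [← sum_stayMass_succ G τ s₁ X n, aliveMass]
  exact sum_le_sum_of_subset_of_nonneg (filter_subset (· ∈ X) univ)
    fun u _ _ => G.stayMass_nonneg τ s₁ X _ u

lemma sum_range_stayMass_notMem_add_aliveMass (n : ℕ) :
    ∑ k ∈ range (n + 1), ∑ u with u ∉ X, G.stayMass τ s₁ X k u + G.aliveMass τ s₁ X n = 1 := by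
  induction n with
  | zero =>
    rw [sum_range_one, aliveMass, add_comm, sum_filter_add_sum_filter_not]
    simp [stayMass_zero]
  | succ n ih =>
    rw [sum_range_succ, ← ih, add_assoc, aliveMass, add_comm (∑ u with u ∉ X, _),
      sum_filter_add_sum_filter_not, sum_stayMass_succ]

end Mass

section Reach

variable (τ : CorrStrategy ι S A) (s₁ : S) (C D : Set S)

lemma reachInProb_eq_tsum_stayMass :
    G.reachInProb τ s₁ C D = ∑' n, ∑ u with u ∈ C ∩ D, G.stayMass τ s₁ (C \ D) n u := by
  unfold reachInProb stayMass
  refine tsum_congr fun n => ?_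
  rw [sum_comm, sum_filter]
  refine sum_congr rfl fun u _ => ?_
  split_ifs with hu
  · simp [hu.1, hu.2, Set.mem_sdiff]
  · exact sum_eq_zero fun f _ => if_neg fun h => hu h.2

lemma sum_notMem_diff (f : S → ℝ) :
    ∑ u with u ∉ C \ D, f u = ∑ u with u ∈ C ∩ D, f u + ∑ u with u ∉ C, f u := by
  simp only [sum_filter, ← sum_add_distrib]
  refine sum_congr rfl fun u _ => ?_
  by_cases hC : u ∈ C <;> by_cases hD : u ∈ D <;> simp [hC, hD]

/-- The quantity under the limit is the probability that by stage `n + 1` the play has left `C`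
before reaching `D`, or has not yet left `C \ D`. -/
lemma reachInProb_eq_one_iff_tendsto :
    G.reachInProb τ s₁ C D = 1 ↔
      Tendsto (fun n => ∑ k ∈ range (n + 1), ∑ u with u ∉ C, G.stayMass τ s₁ (C \ D) k u
        + G.aliveMass τ s₁ (C \ D) n) atTop (𝓝 0) := by
  set m := G.stayMass τ s₁ (C \ D)
  set R := fun k => ∑ u with u ∈ C ∩ D, m k u
  have hR : ∀ k, 0 ≤ R k := fun k => sum_nonneg fun u _ => G.stayMass_nonneg τ s₁ _ k u
  set E := fun n => ∑ k ∈ range (n + 1), ∑ u with u ∉ C, m k u + G.aliveMass τ s₁ (C \ D) n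
  have hE : ∀ n, ∑ k ∈ range (n + 1), R k = 1 - E n := fun n => by
    rw [eq_sub_iff_add_eq, ← add_assoc, ← sum_add_distrib]
    convert G.sum_range_stayMass_notMem_add_aliveMass τ s₁ (C \ D) n using 3 with k
    convert (sum_notMem_diff C D (m k)).symm
  have hE0 : ∀ n, 0 ≤ E n := fun n => add_nonneg
    (sum_nonneg fun k _ => sum_nonneg fun u _ => G.stayMass_nonneg τ s₁ _ k u)
    (G.aliveMass_nonneg τ s₁ _ n)
  have hsum : Summable R := summable_of_sum_range_le hR fun n =>
    calc ∑ k ∈ range n, R k ≤ ∑ k ∈ range (n + 1), R k := sum_le_sum_of_subset_of_nonneg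
            (range_subset_range.2 n.le_succ) fun k _ _ => hR k
      _ ≤ 1 := by linarith [hE n, hE0 n]
  rw [reachInProb_eq_tsum_stayMass, ← hsum.hasSum_iff, hasSum_iff_tendsto_nat_of_nonneg hR,
    ← tendsto_add_atTop_iff_nat 1]
  simp only [hE]
  exact ⟨fun h => by simpa using (tendsto_const_nhds (x := (1 : ℝ))).sub h,
    fun h => by simpa using (tendsto_const_nhds (x := (1 : ℝ))).sub h⟩

theorem reachInProb_eq_one_iff :
    G.reachInProb τ s₁ C D = 1 ↔
      (∀ n, ∀ u ∉ C, G.stayMass τ s₁ (C \ D) n u = 0) ∧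
        Tendsto (G.aliveMass τ s₁ (C \ D)) atTop (𝓝 0) := by
  set m := G.stayMass τ s₁ (C \ D)
  have hm : ∀ k u, 0 ≤ m k u := G.stayMass_nonneg τ s₁ _
  have hexit : ∀ n, 0 ≤ ∑ k ∈ range (n + 1), ∑ u with u ∉ C, m k u := fun n =>
    sum_nonneg fun k _ => sum_nonneg fun u _ => hm k u
  rw [reachInProb_eq_one_iff_tendsto]
  constructor
  · intro hlim
    refine ⟨fun k u hu => le_antisymm (ge_of_tendsto hlim (eventually_atTop.2 ⟨k, fun n hn => ?_⟩))
      (hm k u), squeeze_zero (G.aliveMass_nonneg τ s₁ _) (fun n => le_add_of_nonneg_left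
        (hexit n)) hlim⟩
    calc m k u ≤ ∑ u with u ∉ C, m k u :=
          single_le_sum (fun u _ => hm k u) (mem_filter.2 ⟨mem_univ u, hu⟩)
      _ ≤ ∑ j ∈ range (n + 1), ∑ u with u ∉ C, m j u :=
          single_le_sum (f := fun j => ∑ u with u ∉ C, m j u)
            (fun j _ => sum_nonneg fun u _ => hm j u) (mem_range.2 (by omega))
      _ ≤ _ := le_add_of_nonneg_right (G.aliveMass_nonneg τ s₁ _ n)
  · rintro ⟨hexit0, halive⟩
    convert halive using 2 with n
    rw [sum_eq_zero fun k _ => sum_eq_zero fun u hu => hexit0 k u (mem_filter.1 hu).2, zero_add]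

end Reach

section PureStationary

variable (act : S → ActProf A) (s₁ : S) (X : Set S)

lemma actMass_pureStat (n : ℕ) (t : S) (a : ActProf A) :
    G.actMass (corrOf (pureStat act)) s₁ X n t a
      = if a = act t then G.stayMass (corrOf (pureStat act)) s₁ X n t else 0 := by
  unfold actMass stayMass
  split_ifs with ha <;> simp [corrOf_pureStat_apply, ha]

lemma stayMass_pureStat_succ (n : ℕ) (u : S) :
    G.stayMass (corrOf (pureStat act)) s₁ X (n + 1) u
      = ∑ t with t ∈ X, G.stayMass (corrOf (pureStat act)) s₁ X n t * G.q t (act t) u := by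
  simp [stayMass_succ, actMass_pureStat]

/-- The probability that the chain driven by `act`, started at `t`, spends its next `k`
stages in `X`. -/
def survival : ℕ → S → ℝ
  | 0, _ => 1
  | k + 1, t => ∑ u with u ∈ X, G.q t (act t) u * survival k u

lemma survival_le_one : ∀ k t, G.survival act X k t ≤ 1
  | 0, _ => le_rfl
  | k + 1, t => by
    rw [survival, sum_filter]
    calc ∑ u, (if u ∈ X then G.q t (act t) u * G.survival act X k u else 0)
        ≤ ∑ u, G.q t (act t) u := sum_le_sum fun u _ => by
          split_ifs
          · exact mul_le_of_le_one_right (G.q_nonneg _ _ _) (survival_le_one k u)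
          · exact G.q_nonneg _ _ _
      _ = 1 := G.q_sum _ _

lemma aliveMass_pureStat_add (n k : ℕ) :
    G.aliveMass (corrOf (pureStat act)) s₁ X (n + k)
      = ∑ t with t ∈ X, G.stayMass (corrOf (pureStat act)) s₁ X n t * G.survival act X k t := by
  induction k generalizing n with
  | zero => simp [aliveMass, survival]
  | succ k ih =>
    rw [← add_assoc, add_right_comm, ih]
    simp_rw [survival, stayMass_pureStat_succ, sum_mul, mul_sum]
    rw [sum_comm]
    exact sum_congr rfl fun w _ => sum_congr rfl fun t _ => by ring

end PureStationary

/-- A certificate that the pure stationary profile `act` takes the play from every state of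
`W` to `D` without leaving `C`. -/
structure ReachWitness (C D : Set S) where
  W : Set S
  act : S → ActProf A
  rank : S → ℕ
  subset : W ⊆ C
  closed : ∀ t ∈ W, t ∉ D → ∀ v, 0 < G.q t (act t) v → v ∈ W
  descent : ∀ t ∈ W, t ∉ D → ∃ v, 0 < G.q t (act t) v ∧ rank v < rank t

namespace ReachWitness

variable {G} {C D : Set S} (w : ReachWitness G C D) {s₁ : S}

lemma survival_le {δ : ℝ} (hδ0 : 0 ≤ δ) (hδ1 : δ ≤ 1)
    (hδ : ∀ t v, 0 < G.q t (w.act t) v → δ ≤ G.q t (w.act t) v) :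
    ∀ k, ∀ t ∈ w.W, t ∉ D → w.rank t ≤ k → G.survival w.act (C \ D) k t ≤ 1 - δ ^ k := by
  intro k
  induction k with
  | zero =>
    intro t ht htD hk
    obtain ⟨v, -, hv⟩ := w.descent t ht htD
    omega
  | succ k ih =>
    intro t ht htD hk
    obtain ⟨v, hq, hv⟩ := w.descent t ht htD
    set g := fun u => if u ∈ C \ D then G.survival w.act (C \ D) k u else 0
    have hg : ∀ u, g u ≤ 1 := fun u => by
      simp only [g]
      split_ifs
      exacts [G.survival_le_one _ _ k u, zero_le_one]
    have hgv : δ ^ k ≤ 1 - g v := by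
      simp only [g]
      split_ifs with hvX
      · linarith [ih v (w.closed t ht htD v hq) hvX.2 (by omega)]
      · simpa using pow_le_one₀ hδ0 hδ1
    calc G.survival w.act (C \ D) (k + 1) t = ∑ u, G.q t (w.act t) u * g u := by
          simp [survival, g, sum_filter, mul_ite]
      _ ≤ 1 - G.q t (w.act t) v * (1 - g v) :=
          sum_mul_le_one_sub (G.q_nonneg t _) (G.q_sum t _) hg v
      _ ≤ 1 - δ ^ (k + 1) := by
          rw [pow_succ']
          nlinarith [hδ t v hq, pow_nonneg hδ0 k]

lemma mem_of_stayMass_ne_zero (hs : s₁ ∈ w.W) :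
    ∀ n u, G.stayMass (corrOf (pureStat w.act)) s₁ (C \ D) n u ≠ 0 → u ∈ w.W
  | 0, u, hu => by
    rw [stayMass_zero] at hu
    split_ifs at hu with h
    · exact h ▸ hs
    · exact absurd rfl hu
  | n + 1, u, hu => by
    rw [stayMass_pureStat_succ] at hu
    obtain ⟨t, ht, hne⟩ := exists_ne_zero_of_sum_ne_zero hu
    refine w.closed t (mem_of_stayMass_ne_zero hs n t (left_ne_zero_of_mul hne))
      (by simpa using ht : t ∈ C \ D).2 u ?_
    exact (G.q_nonneg _ _ _).lt_of_ne' (right_ne_zero_of_mul hne)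

lemma aliveMass_add_le (hs : s₁ ∈ w.W) {δ : ℝ} (hδ0 : 0 ≤ δ) (hδ1 : δ ≤ 1)
    (hδ : ∀ t v, 0 < G.q t (w.act t) v → δ ≤ G.q t (w.act t) v) {K : ℕ}
    (hK : ∀ t, w.rank t ≤ K) (n : ℕ) :
    G.aliveMass (corrOf (pureStat w.act)) s₁ (C \ D) (n + K)
      ≤ (1 - δ ^ K) * G.aliveMass (corrOf (pureStat w.act)) s₁ (C \ D) n := by
  rw [aliveMass_pureStat_add, aliveMass, mul_sum]
  refine sum_le_sum fun t ht => ?_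
  set m := G.stayMass (corrOf (pureStat w.act)) s₁ (C \ D) n t
  by_cases hm : m = 0
  · simp [hm]
  have hsurv := w.survival_le hδ0 hδ1 hδ K t (w.mem_of_stayMass_ne_zero hs n t hm)
    (by simpa using ht : t ∈ C \ D).2 (hK t)
  rw [mul_comm (1 - δ ^ K)]
  exact mul_le_mul_of_nonneg_left hsurv (G.stayMass_nonneg _ _ _ n t)

theorem reachInProb_eq_one (hs : s₁ ∈ w.W) :
    G.reachInProb (corrOf (pureStat w.act)) s₁ C D = 1 := by
  rw [reachInProb_eq_one_iff]
  refine ⟨fun n u hu => by_contra fun hne => hu (w.subset (w.mem_of_stayMass_ne_zero hs n u hne)),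
    ?_⟩
  obtain ⟨δ, hδ0, hδ1, hδ⟩ := exists_pos_le_of_pos fun p : S × S => G.q p.1 (w.act p.1) p.2
  set K := univ.sup w.rank + 1
  have hK : ∀ t, w.rank t ≤ K := fun t => (le_sup (mem_univ t)).trans (Nat.le_succ _)
  exact tendsto_zero_of_antitone_of_le_mul (antitone_nat_of_succ_le (G.aliveMass_succ_le _ _ _))
    (G.aliveMass_nonneg _ _ _) (Nat.succ_pos _) (sub_nonneg.2 (pow_le_one₀ hδ0.le hδ1))
    (sub_lt_self 1 (pow_pos hδ0 K))
    (w.aliveMass_add_le hs hδ0.le hδ1 (fun t v => hδ (t, v)) hK)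

def mono (w : ReachWitness G C D) {D' : Set S} (hD : D ⊆ D') : ReachWitness G C D' where
  W := w.W
  act := w.act
  rank := w.rank
  subset := w.subset
  closed t ht htD := w.closed t ht fun h => htD (hD h)
  descent t ht htD := w.descent t ht fun h => htD (hD h)

/-- Ranks of `w₂` are shifted above those of `w₁`, so that moving from `w₂.W` into `w₁.W`
still decreases the rank. -/
def union (w₁ w₂ : ReachWitness G C D) : ReachWitness G C D where
  W := w₁.W ∪ w₂.W
  act t := if t ∈ w₁.W then w₁.act t else w₂.act t
  rank t := if t ∈ w₁.W then w₁.rank t else univ.sup w₁.rank + 1 + w₂.rank t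
  subset := Set.union_subset w₁.subset w₂.subset
  closed t ht htD v hq := by
    by_cases h₁ : t ∈ w₁.W
    · rw [if_pos h₁] at hq
      exact Or.inl (w₁.closed t h₁ htD v hq)
    · rw [if_neg h₁] at hq
      exact Or.inr (w₂.closed t (ht.resolve_left h₁) htD v hq)
  descent t ht htD := by
    by_cases h₁ : t ∈ w₁.W
    · obtain ⟨v, hq, hv⟩ := w₁.descent t h₁ htD
      refine ⟨v, by rwa [if_pos h₁], ?_⟩
      simp only [if_pos h₁, if_pos (w₁.closed t h₁ htD v hq), hv]
    · obtain ⟨v, hq, hv⟩ := w₂.descent t (ht.resolve_left h₁) htD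
      refine ⟨v, by rwa [if_neg h₁], ?_⟩
      have := le_sup (f := w₁.rank) (mem_univ v)
      simp only [if_neg h₁]
      split_ifs <;> omega

variable [∀ i, Nonempty (A i)]

def empty (C D : Set S) : ReachWitness G C D where
  W := ∅
  act _ := Classical.arbitrary _
  rank _ := 0
  subset := Set.empty_subset C
  closed _ ht := absurd ht (Set.notMem_empty _)
  descent _ ht := absurd ht (Set.notMem_empty _)

lemma exists_subset_W (T : Set S) (hT : ∀ t ∈ T, ∃ w : ReachWitness G C D, t ∈ w.W) :
    ∃ w : ReachWitness G C D, T ⊆ w.W := by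
  induction T, T.toFinite using Set.Finite.induction_on with
  | empty => exact ⟨empty C D, Set.empty_subset _⟩
  | @insert a T _ _ ih =>
    obtain ⟨w₁, h₁⟩ := hT a (Set.mem_insert a T)
    obtain ⟨w₂, h₂⟩ := ih fun t ht => hT t (Set.mem_insert_of_mem a ht)
    exact ⟨w₁.union w₂, Set.insert_subset (Or.inl h₁) (h₂.trans Set.subset_union_right)⟩

end ReachWitness

section Support

variable (τ : CorrStrategy ι S A) (s₁ : S) (X : Set S)

def Reachable (u : S) : Prop :=
  ∃ l : List (S × ActProf A), (∀ p ∈ l, p.1 ∈ X) ∧ 0 < G.hprob τ s₁ l u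

def IsSupported (u : S) (a : ActProf A) : Prop :=
  ∃ l : List (S × ActProf A), (∀ p ∈ l, p.1 ∈ X) ∧ 0 < G.hprob τ s₁ l u ∧ 0 < (τ (l, u)).1 a

def SupportedPath (D : Set S) : ℕ → S → Prop
  | 0, u => u ∈ D
  | m + 1, u => ∃ a v, G.IsSupported τ s₁ X u a ∧ 0 < G.q u a v ∧ SupportedPath D m v

lemma reachable_start : G.Reachable τ s₁ X s₁ :=
  ⟨[], by simp, by simp [hprob]⟩

variable {τ s₁ X}

variable {G} in
lemma IsSupported.reachable {u v : S} {a : ActProf A} (h : G.IsSupported τ s₁ X u a)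
    (hu : u ∈ X) (hq : 0 < G.q u a v) : G.Reachable τ s₁ X v := by
  obtain ⟨l, hl, hpos, ha⟩ := h
  exact ⟨(u, a) :: l, by simpa [hu] using hl, mul_pos (mul_pos hpos ha) hq⟩

lemma hprob_le_stayMass {l : List (S × ActProf A)} (hl : ∀ p ∈ l, p.1 ∈ X) (u : S) :
    G.hprob τ s₁ l u ≤ G.stayMass τ s₁ X l.length u := by
  have h := single_le_sum (f := fun f : Fin l.length → S × ActProf A =>
      if ∀ k, (f k).1 ∈ X then G.hprob τ s₁ (List.ofFn f) u else 0)
    (fun f _ => by split_ifs; exacts [G.hprob_nonneg τ s₁ _ u, le_rfl]) (mem_univ l.get)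
  have hX : ∀ k : Fin l.length, (l.get k).1 ∈ X := fun k => hl _ (l.get_mem k)
  simp only [if_pos hX, List.ofFn_get] at h
  exact h

variable {G} in
lemma Reachable.exists_stayMass_pos {u : S} (h : G.Reachable τ s₁ X u) :
    ∃ n, 0 < G.stayMass τ s₁ X n u := by
  obtain ⟨l, hl, hpos⟩ := h
  exact ⟨l.length, hpos.trans_le (G.hprob_le_stayMass hl u)⟩

lemma isSupported_of_actMass_pos {n : ℕ} {u : S} {a : ActProf A}
    (h : 0 < G.actMass τ s₁ X n u a) : G.IsSupported τ s₁ X u a := by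
  obtain ⟨f, -, hf⟩ := exists_ne_zero_of_sum_ne_zero h.ne'
  split_ifs at hf with hX
  · have hτ := (τ (List.ofFn f, u)).2.1 a
    have hp := G.hprob_nonneg τ s₁ (List.ofFn f) u
    exact ⟨List.ofFn f, List.forall_mem_ofFn_iff.2 hX, hp.lt_of_ne' (left_ne_zero_of_mul hf),
      hτ.lt_of_ne' (right_ne_zero_of_mul hf)⟩
  · exact absurd rfl hf

lemma sum_stayMass_le_succ_of_closed {Z : Set S} (hZX : Z ⊆ X)
    (hZ : ∀ u ∈ Z, ∀ a v, G.IsSupported τ s₁ X u a → 0 < G.q u a v → v ∈ Z) (n : ℕ) :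
    ∑ u with u ∈ Z, G.stayMass τ s₁ X n u ≤ ∑ u with u ∈ Z, G.stayMass τ s₁ X (n + 1) u := by
  have hstay : ∀ t ∈ Z, ∀ a, G.actMass τ s₁ X n t a * ∑ u with u ∈ Z, G.q t a u
      = G.actMass τ s₁ X n t a := fun t ht a => by
    rcases (G.actMass_nonneg τ s₁ X n t a).eq_or_lt with h | h
    · simp [← h]
    · rw [sum_filter_of_ne fun v _ hv => hZ t ht a v (G.isSupported_of_actMass_pos h)
        ((G.q_nonneg t a v).lt_of_ne' hv), G.q_sum, mul_one]
  calc ∑ t with t ∈ Z, G.stayMass τ s₁ X n t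
      = ∑ t with t ∈ Z, ∑ a, G.actMass τ s₁ X n t a * ∑ u with u ∈ Z, G.q t a u :=
        sum_congr rfl fun t ht => by
          rw [← sum_actMass]
          exact sum_congr rfl fun a _ => (hstay t (by simpa using ht) a).symm
    _ ≤ ∑ t with t ∈ X, ∑ a, G.actMass τ s₁ X n t a * ∑ u with u ∈ Z, G.q t a u :=
        sum_le_sum_of_subset_of_nonneg (fun t ht => by simpa using hZX (by simpa using ht))
          fun t _ _ => sum_nonneg fun a _ => mul_nonneg (G.actMass_nonneg τ s₁ X n t a)
            (sum_nonneg fun u _ => G.q_nonneg t a u)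
    _ = ∑ u with u ∈ Z, G.stayMass τ s₁ X (n + 1) u := by
        simp_rw [stayMass_succ, mul_sum]
        exact (sum_congr rfl fun t _ => sum_comm).trans sum_comm

end Support

section FromReaching

variable {τ : CorrStrategy ι S A} {s₁ : S} {C D : Set S}

variable {G} in
lemma Reachable.mem (hreach : G.reachInProb τ s₁ C D = 1) {u : S}
    (hu : G.Reachable τ s₁ (C \ D) u) : u ∈ C := by
  obtain ⟨n, hn⟩ := hu.exists_stayMass_pos
  by_contra huC
  exact hn.ne' (((G.reachInProb_eq_one_iff τ s₁ C D).1 hreach).1 n u huC)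

/-- If some reachable state had no such path, the reachable states of `C \ D` without one would
form a set that `τ` cannot leave, trapping a positive mass that never reaches `D`. -/
theorem exists_supportedPath (hreach : G.reachInProb τ s₁ C D = 1) {u : S}
    (hu : G.Reachable τ s₁ (C \ D) u) (huD : u ∉ D) :
    ∃ m, G.SupportedPath τ s₁ (C \ D) D m u := by
  by_contra! hnone
  obtain ⟨Z, hZ⟩ : ∃ Z : Set S, ∀ v, v ∈ Z ↔ v ∈ C \ D ∧ G.Reachable τ s₁ (C \ D) v ∧
      ∀ m, ¬ G.SupportedPath τ s₁ (C \ D) D m v := ⟨_, fun _ => Iff.rfl⟩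
  have hZX : Z ⊆ C \ D := fun v hv => ((hZ v).1 hv).1
  have hZ_closed : ∀ v ∈ Z, ∀ a x, G.IsSupported τ s₁ (C \ D) v a → 0 < G.q v a x → x ∈ Z :=
    fun v hv a x ha hq => by
      obtain ⟨hvX, -, hv⟩ := (hZ v).1 hv
      have hx := ha.reachable hvX hq
      exact (hZ x).2 ⟨⟨hx.mem hreach, fun hxD => hv 1 ⟨a, x, ha, hq, hxD⟩⟩, hx,
        fun m hm => hv (m + 1) ⟨a, x, ha, hq, hm⟩⟩
  set z := fun n => ∑ v with v ∈ Z, G.stayMass τ s₁ (C \ D) n v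
  have hz_mono : Monotone z :=
    monotone_nat_of_le_succ (G.sum_stayMass_le_succ_of_closed hZX hZ_closed)
  have hz_le : ∀ n, z n ≤ G.aliveMass τ s₁ (C \ D) n := fun n =>
    sum_le_sum_of_subset_of_nonneg (fun v hv => by simpa using hZX (by simpa using hv))
      fun v _ _ => G.stayMass_nonneg τ s₁ _ n v
  obtain ⟨n₀, hn₀⟩ := hu.exists_stayMass_pos
  have hz_pos : 0 < z n₀ := hn₀.trans_le (single_le_sum (fun v _ => G.stayMass_nonneg τ s₁ _ n₀ v)
    (mem_filter.2 ⟨mem_univ u, (hZ u).2 ⟨⟨hu.mem hreach, huD⟩, hu, hnone⟩⟩))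
  have hlim := ((G.reachInProb_eq_one_iff τ s₁ C D).1 hreach).2
  exact hz_pos.not_ge (ge_of_tendsto hlim
    (eventually_atTop.2 ⟨n₀, fun n hn => (hz_mono hn).trans (hz_le n)⟩))

variable (τ s₁ C D) in
/-- `sInf ∅ = 0`: states without a supported path to `D` get rank `0`. -/
def pathRank (u : S) : ℕ := sInf {m | G.SupportedPath τ s₁ (C \ D) D m u}

lemma exists_isSupported_pathRank_lt (hreach : G.reachInProb τ s₁ C D = 1) {t : S}
    (ht : G.Reachable τ s₁ (C \ D) t) (htD : t ∉ D) :
    ∃ a, G.IsSupported τ s₁ (C \ D) t a ∧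
      ∃ v, 0 < G.q t a v ∧ G.pathRank τ s₁ C D v < G.pathRank τ s₁ C D t := by
  have hpath : G.SupportedPath τ s₁ (C \ D) D (G.pathRank τ s₁ C D t) t :=
    Nat.sInf_mem (G.exists_supportedPath hreach ht htD)
  obtain ⟨m, hm⟩ : ∃ m, G.pathRank τ s₁ C D t = m + 1 :=
    Nat.exists_eq_succ_of_ne_zero fun h0 => htD (by rwa [h0] at hpath)
  rw [hm] at hpath ⊢
  obtain ⟨a, v, ha, hq, hv⟩ := hpath
  exact ⟨a, ha, v, hq, Nat.lt_succ_of_le (Nat.sInf_le hv)⟩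

theorem exists_reachWitness [∀ i, Nonempty (A i)] (hreach : G.reachInProb τ s₁ C D = 1) :
    ∃ w : ReachWitness G C D, s₁ ∈ w.W := by
  have hact : ∀ t, ∃ a, G.Reachable τ s₁ (C \ D) t → t ∉ D → G.IsSupported τ s₁ (C \ D) t a ∧
      ∃ v, 0 < G.q t a v ∧ G.pathRank τ s₁ C D v < G.pathRank τ s₁ C D t := fun t => by
    by_cases h : G.Reachable τ s₁ (C \ D) t ∧ t ∉ D
    · obtain ⟨a, ha⟩ := G.exists_isSupported_pathRank_lt hreach h.1 h.2
      exact ⟨a, fun _ _ => ha⟩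
    · exact ⟨Classical.arbitrary _, fun h₁ h₂ => absurd ⟨h₁, h₂⟩ h⟩
  choose act hact using hact
  refine ⟨⟨{u | G.Reachable τ s₁ (C \ D) u}, act, G.pathRank τ s₁ C D,
    fun u hu => hu.mem hreach, fun t ht htD v hq => ?_, fun t ht htD => (hact t ht htD).2⟩,
    G.reachable_start τ s₁ _⟩
  exact (hact t ht htD).1.reachable ⟨ht.mem hreach, htD⟩ hq

end FromReaching

end StochGame

open StochGame in
theorem leadsIn_pure_stationary_general
    {ι S : Type*} {A : ι → Type*} [Fintype ι] [DecidableEq ι] [Fintype S]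
    [∀ i, Fintype (A i)] [∀ i, Nonempty (A i)]
    (G : StochGame ι S A)
    (C : Set S) (s s' : S) (h : G.LeadsIn C s s') :
    (∃ σ : Profile ι S A, IsPureStationary σ ∧
        G.reachInProb (corrOf σ) s C {s'} = 1) ∧
    ((∀ t ∈ C, ∀ t' ∈ C, G.LeadsIn C t t') →
      ∀ D : Set S, D ⊂ C → D.Nonempty →
        ∃ σ : Profile ι S A, IsPureStationary σ ∧
          ∀ t ∈ C \ D, G.reachInProb (corrOf σ) t C D = 1) := by
  refine ⟨?_, fun hC D hDC ⟨d, hd⟩ => ?_⟩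
  · obtain ⟨σ, hσ⟩ := h
    obtain ⟨w, hs⟩ := G.exists_reachWitness hσ
    exact ⟨pureStat w.act, isPureStationary_pureStat _, w.reachInProb_eq_one hs⟩
  · obtain ⟨w, hw⟩ := ReachWitness.exists_subset_W (C \ D) fun t ht => by
      obtain ⟨σ, hσ⟩ := hC t ht.1 d (hDC.subset hd)
      obtain ⟨w, hw⟩ := G.exists_reachWitness hσ
      exact ⟨w.mono (Set.singleton_subset_iff.2 hd), hw⟩
    exact ⟨pureStat w.act, isPureStationary_pureStat _, fun t ht => w.reachInProb_eq_one (hw ht)⟩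

open StochGame in
/-- If state `s` leads in `C` to state `s'`, then some pure stationary strategy profile
takes the play from `s` to `s'` before leaving `C`, with probability 1. Consequently,
if every state of `C` leads in `C` to every other state of `C`, then for every nonempty
`D ⊂ C` there is a pure stationary strategy profile that, from any initial state in
`C \ D`, leads the play to `D` without leaving `C`. -/
theorem leadsIn_pure_stationary
    {ι S : Type*} {A : ι → Type*} [Fintype ι] [DecidableEq ι] [Fintype S]
    [∀ i, Fintype (A i)] [Nonempty ι] [Nonempty S] [∀ i, Nonempty (A i)]
    (G : StochGame ι S A) (hu : ∀ i s a, |G.u i s a| ≤ 1)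
    (C : Set S) (s s' : S) (hs : s ∈ C) (hs' : s' ∈ C) (h : G.LeadsIn C s s') :
    (∃ σ : Profile ι S A, IsPureStationary σ ∧
        G.reachInProb (corrOf σ) s C {s'} = 1) ∧
    ((∀ t ∈ C, ∀ t' ∈ C, G.LeadsIn C t t') →
      ∀ D : Set S, D ⊂ C → D.Nonempty →
        ∃ σ : Profile ι S A, IsPureStationary σ ∧
          ∀ t ∈ C \ D, G.reachInProb (corrOf σ) t C D = 1) :=
  leadsIn_pure_stationary_general G C s s' h
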